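/- arXiv:2402.16978 — 8 statements merged into one kernel-verified Lean document; each statement's English description precedes it below -/
import Mathlib

section
/- Per-iteration objective decrease bound: under the inexact Bregman proximal point condition, η_k := f(P^{k+1}) − f(P^k) satisfies η_k ≤ −β_k ( D_h(P^k, P^{k+1}) + D_h(P^{k+1}, P^k) ) + ν_k ≤ ν_k. -/
open scoped RealInnerProductSpace

section Bregman

variable {E : Type*} [NormedAddCommGroup E] [InnerProductSpace ℝ E]
  {h : E → ℝ} {gh : E → E} {D : E → E → ℝ}

theorem bregman_add_bregman_swap (hD : ∀ u v, D u v = h u - h v - ⟪gh v, u - v⟫) (u v : E) :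
    D u v + D v u = ⟪gh u - gh v, u - v⟫ := by
  rw [hD, hD, inner_sub_left, ← neg_sub u v, inner_neg_right]
  ring

theorem bregman_nonneg (hconv : ∀ u v, h v + ⟪gh v, u - v⟫ ≤ h u)
    (hD : ∀ u v, D u v = h u - h v - ⟪gh v, u - v⟫) (u v : E) : 0 ≤ D u v := by
  rw [hD]
  linarith [hconv u v]

end Bregman

theorem sub_le_inner_add_of_approx_subgradient {E : Type*} [NormedAddCommGroup E]
    [InnerProductSpace ℝ E] {f : E → ℝ} {x d : E} {ν : ℝ}
    (hd : ∀ y, f x + ⟪d, y - x⟫ - ν ≤ f y) (y : E) : f x - f y ≤ ⟪d, x - y⟫ + ν := by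
  have := hd y
  rw [← neg_sub x y, inner_neg_right] at this
  linarith

theorem per_iteration_decrease_general {E : Type*} [NormedAddCommGroup E] [InnerProductSpace ℝ E]
    (f h : E → ℝ)
    (gh : E → E)
    (hconv : ∀ u v, h v + ⟪gh v, u - v⟫ ≤ h u)
    (D : E → E → ℝ) (hD : ∀ u v, D u v = h u - h v - ⟪gh v, u - v⟫)
    (βk νk : ℝ) (hβ : 0 < βk)
    (Pk Pk1 : E) (d : E)
    (hd : ∀ y, f Pk1 + ⟪d, y - Pk1⟫ - νk ≤ f y)
    (hopt : d + βk • (gh Pk1 - gh Pk) = 0) :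
    f Pk1 - f Pk ≤ -βk * (D Pk Pk1 + D Pk1 Pk) + νk ∧
    -βk * (D Pk Pk1 + D Pk1 Pk) + νk ≤ νk := by
  have hd_eq : d = -βk • (gh Pk1 - gh Pk) := by
    rw [neg_smul]; exact eq_neg_of_add_eq_zero_left hopt
  have hsym : D Pk Pk1 + D Pk1 Pk = ⟪gh Pk1 - gh Pk, Pk1 - Pk⟫ := by
    rw [add_comm]; exact bregman_add_bregman_swap hD Pk1 Pk
  have hdescent := sub_le_inner_add_of_approx_subgradient hd Pk
  rw [hd_eq, real_inner_smul_left, ← hsym] at hdescent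
  refine ⟨hdescent, ?_⟩
  have hD_nonneg := add_nonneg (bregman_nonneg hconv hD Pk Pk1) (bregman_nonneg hconv hD Pk1 Pk)
  linarith [mul_nonneg hβ.le hD_nonneg]

theorem per_iteration_decrease {E : Type*} [NormedAddCommGroup E] [InnerProductSpace ℝ E]
    (f h : E → ℝ) (hf : ConvexOn ℝ Set.univ f)
    (gh : E → E)
    (hconv : ∀ u v, h v + ⟪gh v, u - v⟫ ≤ h u)
    (D : E → E → ℝ) (hD : ∀ u v, D u v = h u - h v - ⟪gh v, u - v⟫)
    (βk νk : ℝ) (hβ : 0 < βk) (hν : 0 ≤ νk)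
    (Pk Pk1 : E) (d : E)
    (hd : ∀ y, f Pk1 + ⟪d, y - Pk1⟫ - νk ≤ f y)
    (hopt : d + βk • (gh Pk1 - gh Pk) = 0) :
    f Pk1 - f Pk ≤ -βk * (D Pk Pk1 + D Pk1 Pk) + νk ∧
    -βk * (D Pk Pk1 + D Pk1 Pk) + νk ≤ νk :=
  per_iteration_decrease_general f h gh hconv D hD βk νk hβ Pk Pk1 d hd hopt
end

section
/- Ergodic convergence rate of the inexact Bregman proximal point method: if each iterate satisfies the sufficient descent inequality f(P^{k+1}) ≤ f(P) + β_k(D_h(P,P^k) − D_h(P,P^{k+1}) − D_h(P^{k+1},P^k)) + ν_k, then for any minimizer P* of f and any N ≥ 1, f(P^N) − f(P*) ≤ τ_{N−1}^{−1} ( D_h(P*, P^0) + Σ_{k=0}^{N−1} β_k^{−1} ν_k + Σ_{k=0}^{N−1} τ_{k−1} η_k ), where τ_{−1} = 0, τ_k = Σ_{t=0}^k β_t^{−1}, η_k = f(P^{k+1}) − f(P^k). -/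
theorem ergodic_rate {E : Type*} (f : E → ℝ) (P : ℕ → E)
    (Pstar : E) (hmin : ∀ Q, f Pstar ≤ f Q)
    (β ν : ℕ → ℝ) (hβ : ∀ k, 0 < β k) (hν : ∀ k, 0 ≤ ν k)
    (D : E → E → ℝ) (hDnn : ∀ u v, 0 ≤ D u v)
    (hdesc : ∀ (Q : E) (k : ℕ),
      f (P (k + 1)) ≤ f Q + β k * (D Q (P k) - D Q (P (k + 1)) - D (P (k + 1)) (P k)) + ν k)
    (N : ℕ) (hN : 1 ≤ N) :
    f (P N) - f Pstar ≤
      (∑ t ∈ Finset.range N, (β t)⁻¹)⁻¹ *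
        (D Pstar (P 0) + ∑ k ∈ Finset.range N, (β k)⁻¹ * ν k
          + ∑ k ∈ Finset.range N,
              (∑ t ∈ Finset.range k, (β t)⁻¹) * (f (P (k + 1)) - f (P k))) := by
  set τ : ℕ → ℝ := fun k => ∑ t ∈ Finset.range k, (β t)⁻¹ with hτ
  have hS : 0 < τ N := by
    apply Finset.sum_pos (fun i _ => inv_pos.mpr (hβ i))
    exact Finset.nonempty_range_iff.mpr (by omega)
  -- Abel summation identity
  have habel : τ N * (f (P N) - f Pstar)
      = ∑ k ∈ Finset.range N, (β k)⁻¹ * (f (P (k + 1)) - f Pstar)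
        + ∑ k ∈ Finset.range N, τ k * (f (P (k + 1)) - f (P k)) := by
    have := Finset.sum_range_sub (fun k => τ k * (f (P k) - f Pstar)) N
    rw [← Finset.sum_add_distrib]
    rw [show τ 0 * (f (P 0) - f Pstar) = 0 by simp [hτ], sub_zero] at this
    rw [← this]
    apply Finset.sum_congr rfl
    intro k _
    have : τ (k + 1) = τ k + (β k)⁻¹ := by simp [hτ, Finset.sum_range_succ]
    rw [this]; ring
  -- per-step bound
  have hstep : ∀ k, (β k)⁻¹ * (f (P (k + 1)) - f Pstar)
      ≤ D Pstar (P k) - D Pstar (P (k + 1)) + (β k)⁻¹ * ν k := by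
    intro k
    have h := hdesc Pstar k
    have hb := hβ k
    have h2 : f (P (k + 1)) - f Pstar
        ≤ β k * (D Pstar (P k) - D Pstar (P (k + 1))) + ν k := by
      nlinarith [hDnn (P (k + 1)) (P k)]
    have := mul_le_mul_of_nonneg_left h2 (le_of_lt (inv_pos.mpr hb))
    calc (β k)⁻¹ * (f (P (k + 1)) - f Pstar)
        ≤ (β k)⁻¹ * (β k * (D Pstar (P k) - D Pstar (P (k + 1))) + ν k) := this
      _ = D Pstar (P k) - D Pstar (P (k + 1)) + (β k)⁻¹ * ν k := by
          field_simp
  have hsum : ∑ k ∈ Finset.range N, (β k)⁻¹ * (f (P (k + 1)) - f Pstar)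
      ≤ D Pstar (P 0) + ∑ k ∈ Finset.range N, (β k)⁻¹ * ν k := by
    calc ∑ k ∈ Finset.range N, (β k)⁻¹ * (f (P (k + 1)) - f Pstar)
        ≤ ∑ k ∈ Finset.range N, (D Pstar (P k) - D Pstar (P (k + 1)) + (β k)⁻¹ * ν k) :=
          Finset.sum_le_sum (fun k _ => hstep k)
      _ = (D Pstar (P 0) - D Pstar (P N)) + ∑ k ∈ Finset.range N, (β k)⁻¹ * ν k := by
          rw [Finset.sum_add_distrib, Finset.sum_range_sub' (fun k => D Pstar (P k)) N]
      _ ≤ D Pstar (P 0) + ∑ k ∈ Finset.range N, (β k)⁻¹ * ν k := by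
          have := hDnn Pstar (P N); linarith
  rw [le_inv_mul_iff₀ hS]
  rw [habel]
  linarith
end

section
/- Triangle scaling property of the KL divergence with exponent 1: for the entropy kernel h(x) = Σ_i x_i(log x_i − 1), for all positive vectors x, y, z and all θ ∈ [0,1], D_h((1−θ)x + θy, (1−θ)x + θz) ≤ θ D_h(y,z). -/
open Real in
lemma kl_scalar (a b c θ : ℝ) (ha : 0 < a) (hb : 0 < b) (hc : 0 < c)
    (h0 : 0 ≤ θ) (h1 : θ ≤ 1) :
    ((1-θ)*a + θ*b) * Real.log (((1-θ)*a + θ*b)/((1-θ)*a + θ*c))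
      ≤ θ * (b * Real.log (b/c)) := by
  rcases eq_or_lt_of_le h0 with h0 | h0
  · simp [← h0, div_self ha.ne']
  rcases eq_or_lt_of_le h1 with h1 | h1
  · subst h1; simp
  have h1θ : 0 < 1 - θ := by linarith
  have hq1 : 0 < (1-θ)*a := mul_pos h1θ ha
  have hq2 : 0 < θ*c := mul_pos h0 hc
  have hv : 0 < (1-θ)*a + θ*c := by linarith
  have hsum : ((1-θ)*a)/((1-θ)*a + θ*c) + (θ*c)/((1-θ)*a + θ*c) = 1 := by
    field_simp
  have hkey := Real.convexOn_mul_log.2 (x := (1:ℝ)) (y := b/c)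
    (Set.mem_Ici.mpr (le_of_lt one_pos))
    (Set.mem_Ici.mpr (le_of_lt (div_pos hb hc)))
    (le_of_lt (div_pos hq1 hv)) (le_of_lt (div_pos hq2 hv)) hsum
  simp only [smul_eq_mul] at hkey
  have hmix : ((1-θ)*a)/((1-θ)*a + θ*c) * 1 + (θ*c)/((1-θ)*a + θ*c) * (b/c)
      = ((1-θ)*a + θ*b)/((1-θ)*a + θ*c) := by
    field_simp
  rw [hmix] at hkey
  simp only [Real.log_one, mul_zero, mul_one] at hkey
  have := mul_le_mul_of_nonneg_left hkey hv.le
  calc ((1-θ)*a + θ*b) * Real.log (((1-θ)*a + θ*b)/((1-θ)*a + θ*c))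
      = ((1-θ)*a + θ*c) * (((1-θ)*a + θ*b)/((1-θ)*a + θ*c) *
        Real.log (((1-θ)*a + θ*b)/((1-θ)*a + θ*c))) := by
        field_simp
    _ ≤ ((1-θ)*a + θ*c) * (0 +
        (θ*c)/((1-θ)*a + θ*c) * (b/c * Real.log (b/c))) := this
    _ = θ * (b * Real.log (b/c)) := by field_simp; ring

theorem kl_triangle_scaling {n : ℕ} (x y z : Fin n → ℝ)
    (hx : ∀ i, 0 < x i) (hy : ∀ i, 0 < y i) (hz : ∀ i, 0 < z i)
    (θ : ℝ) (hθ : θ ∈ Set.Icc (0 : ℝ) 1)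
    (D : (Fin n → ℝ) → (Fin n → ℝ) → ℝ)
    (hD : ∀ u v, D u v = ∑ i, u i * Real.log (u i / v i) - ∑ i, u i + ∑ i, v i) :
    D ((1 - θ) • x + θ • y) ((1 - θ) • x + θ • z) ≤ θ * D y z := by
  obtain ⟨h0, h1⟩ := hθ
  rw [hD, hD]
  simp only [Pi.add_apply, Pi.smul_apply, smul_eq_mul]
  have hsum : ∑ i, ((1-θ)*x i + θ*y i) *
        Real.log (((1-θ)*x i + θ*y i)/((1-θ)*x i + θ*z i))
      ≤ ∑ i, θ * (y i * Real.log (y i / z i)) :=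
    Finset.sum_le_sum fun i _ =>
      kl_scalar (x i) (y i) (z i) θ (hx i) (hy i) (hz i) h0 h1
  rw [← Finset.mul_sum] at hsum
  have hlin : ∑ i, ((1-θ)*x i + θ*y i) - ∑ i, ((1-θ)*x i + θ*z i)
      = θ * ∑ i, y i - θ * ∑ i, z i := by
    simp only [Finset.sum_add_distrib, Finset.mul_sum]
    rw [← Finset.mul_sum, ← Finset.mul_sum]
    ring
  rw [mul_add, mul_sub]
  linarith [hsum, hlin]
end

section
/- Estimate sequence gap contraction: let φ_0(P) = f(P^0) + σ D_h(P,P^0) and φ_{k+1}(P) = (1−θ_k)φ_k(P) + θ_k ( f(P^{k+1}) + β_k ⟨∇h(Y^k) − ∇h(P^{k+1}), P − P^{k+1}⟩ − ν_k ). If 0 ∈ ∂_{ν_k} f(P^{k+1}) + β_k(∇h(P^{k+1}) − ∇h(Y^k)), then for all P ∈ dom f, φ_{k+1}(P) − f(P) ≤ (1−θ_k)(φ_k(P) − f(P)). -/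
/-!
The optimality condition makes `β_k (∇h(Y^k) - ∇h(P^{k+1}))` a `ν_k`-subgradient of `f` at
`P^{k+1}`, so the affine function mixed into `φ_{k+1}` minorizes `f`; averaging it with `φ_k`
then contracts the gap `φ - f` by the factor `1 - θ_k`.
-/

open scoped RealInnerProductSpace

theorem mul_add_mul_sub_le_of_le {θ a b c : ℝ} (hθ : 0 ≤ θ) (hbc : b ≤ c) :
    (1 - θ) * a + θ * b - c ≤ (1 - θ) * (a - c) := by
  linarith [mul_le_mul_of_nonneg_left hbc hθ]

theorem le_of_inexact_bregman_prox_step {E : Type*}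
    [NormedAddCommGroup E] [InnerProductSpace ℝ E]
    {f : E → ℝ} {g : E → E} {β ν : ℝ} {Y P' d : E}
    (hd : ∀ Q, f P' + ⟪d, Q - P'⟫ - ν ≤ f Q) (hopt : d + β • (g P' - g Y) = 0) (P : E) :
    f P' + β * ⟪g Y - g P', P - P'⟫ - ν ≤ f P := by
  have hd_eq : d = β • (g Y - g P') := by
    rw [eq_neg_of_add_eq_zero_left hopt, ← smul_neg, neg_sub]
  simpa only [hd_eq, real_inner_smul_left] using hd P

theorem estimate_sequence_gap_contraction_general {E : Type*}
    [NormedAddCommGroup E] [InnerProductSpace ℝ E]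
    (f : E → ℝ)
    (gh : E → E)
    (βk νk θk : ℝ)
    (hθ : θk ∈ Set.Icc (0 : ℝ) 1)
    (Yk Pk1 : E) (φk φk1 : E → ℝ)
    (hφ : ∀ P, φk1 P = (1 - θk) * φk P
        + θk * (f Pk1 + βk * ⟪gh Yk - gh Pk1, P - Pk1⟫ - νk))
    (d : E) (hd : ∀ Q, f Pk1 + ⟪d, Q - Pk1⟫ - νk ≤ f Q)
    (hopt : d + βk • (gh Pk1 - gh Yk) = 0) :
    ∀ P, φk1 P - f P ≤ (1 - θk) * (φk P - f P) := by
  intro P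
  rw [hφ P]
  exact mul_add_mul_sub_le_of_le hθ.1 (le_of_inexact_bregman_prox_step hd hopt P)

theorem estimate_sequence_gap_contraction {E : Type*}
    [NormedAddCommGroup E] [InnerProductSpace ℝ E]
    (f h : E → ℝ) (hf : ConvexOn ℝ Set.univ f)
    (gh : E → E)
    (σ βk νk θk : ℝ) (hσ : 0 < σ) (hβ : 0 < βk) (hν : 0 ≤ νk)
    (hθ : θk ∈ Set.Icc (0 : ℝ) 1)
    (Yk Pk1 : E) (φk φk1 : E → ℝ)
    (hφ : ∀ P, φk1 P = (1 - θk) * φk P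
        + θk * (f Pk1 + βk * ⟪gh Yk - gh Pk1, P - Pk1⟫ - νk))
    (d : E) (hd : ∀ Q, f Pk1 + ⟪d, Q - Pk1⟫ - νk ≤ f Q)
    (hopt : d + βk • (gh Pk1 - gh Yk) = 0) :
    ∀ P, φk1 P - f P ≤ (1 - θk) * (φk P - f P) :=
  estimate_sequence_gap_contraction_general f gh βk νk θk hθ Yk Pk1 φk φk1 hφ d hd hopt
end

section
/- Acceleration invariant: suppose D_h has the triangle scaling property with exponent γ ≥ 1 and constant τ > 0, Y^k = θ_k Z^k + (1−θ_k)P^k, the new iterate satisfies the inexact condition 0 ∈ ∂_{ν_k} f(P^{k+1}) + β_k(∇h(P^{k+1}) − ∇h(Y^k)), Z^{k+1} = argmin φ_{k+1}, and θ_k is chosen so that τ β_k θ_k^γ = σ ρ_k (1−θ_k). If f(P^k) ≤ φ_k^* + δ_k, then f(P^{k+1}) ≤ φ_{k+1}^* + δ_{k+1}, where δ_{k+1} = (1−θ_k)δ_k + ν_k and φ_k^* = min_P φ_k(P). -/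
/-!
Evaluate `φ_{k+1}` at `Z^{k+1}` and compare it with `f(P^{k+1})` through the auxiliary point
`W = (1 - θ) P^k + θ Z^{k+1}`. The inexact optimality condition, tested at `P^k` and combined with
`f(P^k) ≤ φ_k^* + δ_k`, accounts for the `(1 - θ)` part; what remains is `β ⟪∇h(Y) - ∇h(P^{k+1}), W - P^{k+1}⟫`.
By the three-point identity this is at least `-β D(W, Y)`, and since `W` and `Y` are the same convex
combinations of `(P^k, Z^{k+1})` and `(P^k, Z^k)`, triangle scaling and the choice of `θ` bound
`β D(W, Y)` by `σ ρ (1 - θ) D(Z^{k+1}, Z^k)`, the term that `φ_k` contributes to `φ_{k+1}(Z^{k+1})`.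
-/

open scoped RealInnerProductSpace

section Bregman

variable {E : Type*} [NormedAddCommGroup E] [InnerProductSpace ℝ E]

def bregmanDiv (h : E → ℝ) (gh : E → E) (u v : E) : ℝ := h u - h v - ⟪gh v, u - v⟫

theorem bregmanDiv_nonneg {h : E → ℝ} {gh : E → E}
    (hconv : ∀ u v, h v + ⟪gh v, u - v⟫ ≤ h u) (u v : E) : 0 ≤ bregmanDiv h gh u v := by
  have := hconv u v
  unfold bregmanDiv
  linarith

theorem inner_gradient_sub_eq_bregmanDiv (h : E → ℝ) (gh : E → E) (w p y : E) :
    ⟪gh y - gh p, w - p⟫ = bregmanDiv h gh w p + bregmanDiv h gh p y - bregmanDiv h gh w y := by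
  simp only [bregmanDiv, inner_sub_left, inner_sub_right]
  ring

theorem neg_bregmanDiv_le_inner_gradient_sub {h : E → ℝ} {gh : E → E}
    (hconv : ∀ u v, h v + ⟪gh v, u - v⟫ ≤ h u) (w p y : E) :
    -bregmanDiv h gh w y ≤ ⟪gh y - gh p, w - p⟫ := by
  rw [inner_gradient_sub_eq_bregmanDiv h gh]
  linarith [bregmanDiv_nonneg hconv w p, bregmanDiv_nonneg hconv p y]

end Bregman

theorem real_inner_convexComb_sub {E : Type*} [NormedAddCommGroup E] [InnerProductSpace ℝ E]
    (g p z q : E) (θ : ℝ) :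
    ⟪g, (1 - θ) • p + θ • z - q⟫ = (1 - θ) * ⟪g, p - q⟫ + θ * ⟪g, z - q⟫ := by
  rw [show (1 - θ) • p + θ • z - q = (1 - θ) • (p - q) + θ • (z - q) by module,
    inner_add_right, real_inner_smul_right, real_inner_smul_right]

theorem acceleration_invariant_general {E : Type*}
    [NormedAddCommGroup E] [InnerProductSpace ℝ E]
    (f h : E → ℝ)
    (gh : E → E)
    (hconv : ∀ u v, h v + ⟪gh v, u - v⟫ ≤ h u)
    (D : E → E → ℝ) (hD : ∀ u v, D u v = h u - h v - ⟪gh v, u - v⟫)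
    (γ τ : ℝ)
    (hTSP : ∀ θ ∈ Set.Icc (0 : ℝ) 1, ∀ x y z : E,
      D ((1 - θ) • x + θ • y) ((1 - θ) • x + θ • z) ≤ τ * θ ^ γ * D y z)
    (σ βk νk θk ρk δk : ℝ)
    (hβ : 0 < βk)
    (hθ : θk ∈ Set.Icc (0 : ℝ) 1)
    (Pk Pk1 Zk Zk1 Yk : E)
    (hY : Yk = θk • Zk + (1 - θk) • Pk)
    (φk φk1 : E → ℝ)
    (hφk : ∀ P, φk P = φk Zk + σ * ρk * D P Zk)
    (hφk1 : ∀ P, φk1 P = (1 - θk) * φk P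
        + θk * (f Pk1 + βk * ⟪gh Yk - gh Pk1, P - Pk1⟫ - νk))
    (hsub : ∀ Q, f Pk1 + βk * ⟪gh Yk - gh Pk1, Q - Pk1⟫ - νk ≤ f Q)
    (hθcond : τ * βk * θk ^ γ = σ * ρk * (1 - θk))
    (hk : f Pk ≤ φk Zk + δk) :
    f Pk1 ≤ φk1 Zk1 + ((1 - θk) * δk + νk) := by
  obtain rfl : D = bregmanDiv h gh := funext₂ hD
  set W := (1 - θk) • Pk + θk • Zk1
  have hscale : bregmanDiv h gh W Yk ≤ τ * θk ^ γ * bregmanDiv h gh Zk1 Zk := by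
    simpa only [hY, add_comm (θk • Zk)] using hTSP θk hθ Pk Zk1 Zk
  have hcoupling :
      -(σ * ρk * (1 - θk) * bregmanDiv h gh Zk1 Zk) ≤ βk * ⟪gh Yk - gh Pk1, W - Pk1⟫ :=
    calc -(σ * ρk * (1 - θk) * bregmanDiv h gh Zk1 Zk)
        = βk * -(τ * θk ^ γ * bregmanDiv h gh Zk1 Zk) := by rw [← hθcond]; ring
      _ ≤ βk * -bregmanDiv h gh W Yk := by gcongr
      _ ≤ βk * ⟪gh Yk - gh Pk1, W - Pk1⟫ := by
        gcongr; exact neg_bregmanDiv_le_inner_gradient_sub hconv W Pk1 Yk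
  have hprev : (1 - θk) * (f Pk1 + βk * ⟪gh Yk - gh Pk1, Pk - Pk1⟫ - νk)
      ≤ (1 - θk) * (φk Zk + δk) :=
    mul_le_mul_of_nonneg_left ((hsub Pk).trans hk) (sub_nonneg.mpr hθ.2)
  rw [real_inner_convexComb_sub] at hcoupling
  rw [hφk1, hφk Zk1]
  linear_combination hprev + hcoupling

theorem acceleration_invariant {E : Type*}
    [NormedAddCommGroup E] [InnerProductSpace ℝ E]
    (f h : E → ℝ) (hf : ConvexOn ℝ Set.univ f)
    (gh : E → E)
    (hconv : ∀ u v, h v + ⟪gh v, u - v⟫ ≤ h u)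
    (D : E → E → ℝ) (hD : ∀ u v, D u v = h u - h v - ⟪gh v, u - v⟫)
    (γ τ : ℝ) (hγ : 1 ≤ γ) (hτ : 0 < τ)
    (hTSP : ∀ θ ∈ Set.Icc (0 : ℝ) 1, ∀ x y z : E,
      D ((1 - θ) • x + θ • y) ((1 - θ) • x + θ • z) ≤ τ * θ ^ γ * D y z)
    (σ βk νk θk ρk δk : ℝ)
    (hσ : 0 < σ) (hβ : 0 < βk) (hν : 0 ≤ νk) (hρ : 0 < ρk) (hδ : 0 ≤ δk)
    (hθ : θk ∈ Set.Icc (0 : ℝ) 1)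
    (Pk Pk1 Zk Zk1 Yk : E)
    (hY : Yk = θk • Zk + (1 - θk) • Pk)
    (φk φk1 : E → ℝ)
    (hφk : ∀ P, φk P = φk Zk + σ * ρk * D P Zk)
    (hφk1 : ∀ P, φk1 P = (1 - θk) * φk P
        + θk * (f Pk1 + βk * ⟪gh Yk - gh Pk1, P - Pk1⟫ - νk))
    (hZk1 : ∀ P, φk1 Zk1 ≤ φk1 P)
    (hsub : ∀ Q, f Pk1 + βk * ⟪gh Yk - gh Pk1, Q - Pk1⟫ - νk ≤ f Q)
    (hθcond : τ * βk * θk ^ γ = σ * ρk * (1 - θk))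
    (hk : f Pk ≤ φk Zk + δk) :
    f Pk1 ≤ φk1 Zk1 + ((1 - θk) * δk + νk) :=
  acceleration_invariant_general f h gh hconv D hD γ τ hTSP σ βk νk θk ρk δk hβ hθ Pk Pk1 Zk Zk1 Yk
    hY φk φk1 hφk hφk1 hsub hθcond hk
end

section
/- Global convergence rate of the accelerated method: under the acceleration invariant, for any minimizer P* of f, f(P^N) − f(P*) ≤ ρ_N ( f(P^0) − f(P*) + σ D_h(P*, P^0) ) + δ_N. -/
theorem accelerated_global_rate_general {E : Type*}
    (f : E → ℝ) (D : E → E → ℝ)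
    (σ : ℝ)
    (θ δ : ℕ → ℝ)
    (P Z : ℕ → E) (φ : ℕ → E → ℝ)
    (hφ0 : ∀ Q, φ 0 Q = f (P 0) + σ * D Q (P 0))
    (hinv : ∀ N, f (P N) ≤ φ N (Z N) + δ N)
    (hgap : ∀ N Q, φ N Q - f Q ≤ (∏ i ∈ Finset.range N, (1 - θ i)) * (φ 0 Q - f Q))
    (hZ : ∀ N Q, φ N (Z N) ≤ φ N Q)
    (Pstar : E) (N : ℕ) :
    f (P N) - f Pstar ≤
      (∏ i ∈ Finset.range N, (1 - θ i)) *
        (f (P 0) - f Pstar + σ * D Pstar (P 0)) + δ N := by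
  calc f (P N) - f Pstar
      ≤ φ N (Z N) - f Pstar + δ N := by linarith [hinv N]
    _ ≤ φ N Pstar - f Pstar + δ N := by linarith [hZ N Pstar]
    _ ≤ (∏ i ∈ Finset.range N, (1 - θ i)) * (φ 0 Pstar - f Pstar) + δ N := by
        linarith [hgap N Pstar]
    _ = (∏ i ∈ Finset.range N, (1 - θ i)) *
          (f (P 0) - f Pstar + σ * D Pstar (P 0)) + δ N := by
        rw [hφ0]; ring

theorem accelerated_global_rate {E : Type*}
    (f : E → ℝ) (D : E → E → ℝ)
    (σ : ℝ) (hσ : 0 < σ)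
    (θ ν δ : ℕ → ℝ) (hθ : ∀ i, θ i ∈ Set.Icc (0 : ℝ) 1) (hν : ∀ k, 0 ≤ ν k)
    (hδ0 : δ 0 = 0) (hδ : ∀ k, δ (k + 1) = (1 - θ k) * δ k + ν k)
    (P Z : ℕ → E) (φ : ℕ → E → ℝ)
    (hφ0 : ∀ Q, φ 0 Q = f (P 0) + σ * D Q (P 0))
    (hinv : ∀ N, f (P N) ≤ φ N (Z N) + δ N)
    (hgap : ∀ N Q, φ N Q - f Q ≤ (∏ i ∈ Finset.range N, (1 - θ i)) * (φ 0 Q - f Q))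
    (hZ : ∀ N Q, φ N (Z N) ≤ φ N Q)
    (Pstar : E) (hmin : ∀ Q, f Pstar ≤ f Q) (N : ℕ) :
    f (P N) - f Pstar ≤
      (∏ i ∈ Finset.range N, (1 - θ i)) *
        (f (P 0) - f Pstar + σ * D Pstar (P 0)) + δ N :=
  accelerated_global_rate_general f D σ θ δ P Z φ hφ0 hinv hgap hZ Pstar N
end

section
/- Two-sided bound on the contraction products: if positive numbers ρ_k satisfy ρ_0 = 1, ρ_{k+1} = (1−θ_k)ρ_k with τ β_k θ_k^γ = σ ρ_{k+1} and θ_k ∈ (0,1), and γ ≥ 1, then for all N ≥ 1, (1 + (σ/τ)^{1/γ} Σ_{k=0}^{N−1} β_k^{−1/γ})^{−γ} ≤ ρ_N ≤ (1 + γ^{−1}(σ/τ)^{1/γ} Σ_{k=0}^{N−1} β_k^{−1/γ})^{−γ}. -/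
/-!
Pass to `x k = ρ k ^ (-1/γ)`. The defining relation says exactly
`θ k * x (k + 1) = (σ / τ) ^ (1/γ) * β k ^ (-1/γ)`, while `x k = (1 - θ k) ^ (1/γ) * x (k + 1)`
and Bernoulli's inequality `1 - θ ≤ (1 - θ) ^ (1/γ) ≤ 1 - θ / γ` put the increment
`x (k + 1) - x k` between `γ⁻¹ * θ k * x (k + 1)` and `θ k * x (k + 1)`. Telescoping bounds `x N`
on both sides, and `ρ N = x N ^ (-γ)` reverses the inequalities.
-/

open Real Finset

lemma rpow_neg_one_sub_mul_sub_rpow_neg_mem_Icc {p θ r : ℝ} (hp0 : 0 ≤ p) (hp1 : p ≤ 1)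
    (hθ0 : 0 ≤ θ) (hθ1 : θ < 1) (hr : 0 < r) :
    ((1 - θ) * r) ^ (-p) - r ^ (-p) ∈
      Set.Icc (p * θ * ((1 - θ) * r) ^ (-p)) (θ * ((1 - θ) * r) ^ (-p)) := by
  have hθ1' : 0 < 1 - θ := by linarith
  have hy : 0 < ((1 - θ) * r) ^ (-p) := by positivity
  have hsplit : ((1 - θ) * r) ^ (-p) - r ^ (-p) = ((1 - θ) * r) ^ (-p) * (1 - (1 - θ) ^ p) := by
    rw [mul_rpow hθ1'.le hr.le, rpow_neg hθ1'.le]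
    field_simp
  have hbernoulli : (1 - θ) ^ p ≤ 1 - p * θ := by
    simpa [sub_eq_add_neg] using rpow_one_add_le_one_add_mul_self (s := -θ) (by linarith) hp0 hp1
  have hself : 1 - θ ≤ (1 - θ) ^ p := self_le_rpow_of_le_one hθ1'.le (by linarith) hp1
  rw [hsplit]
  constructor <;> nlinarith

lemma mul_rpow_neg_eq_of_mul_rpow_eq {σ τ γ β θ r : ℝ} (hσ : 0 ≤ σ) (hτ : 0 < τ) (hβ : 0 < β)
    (hγ : γ ≠ 0) (hθ : 0 ≤ θ) (hr : 0 < r) (h : τ * β * θ ^ γ = σ * r) :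
    θ * r ^ (-(1 / γ)) = (σ / τ) ^ (1 / γ) * β ^ (-(1 / γ)) := by
  have hθγ : θ ^ γ = σ / τ * β⁻¹ * r := by
    field_simp
    linarith
  have hθ_eq : θ = (σ / τ) ^ (1 / γ) * β ^ (-(1 / γ)) * r ^ (1 / γ) := by
    rw [← rpow_rpow_inv hθ hγ, hθγ, inv_eq_one_div γ, mul_rpow (by positivity) hr.le,
      mul_rpow (by positivity) (by positivity), inv_rpow hβ.le, ← rpow_neg hβ.le]
  rw [hθ_eq, mul_assoc, mul_assoc, ← rpow_add hr, add_neg_cancel, rpow_zero, mul_one]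

lemma sub_mem_Icc_sum_of_forall_sub_mem_Icc {x a b : ℕ → ℝ}
    (h : ∀ k, x (k + 1) - x k ∈ Set.Icc (a k) (b k)) (N : ℕ) :
    x N - x 0 ∈ Set.Icc (∑ k ∈ range N, a k) (∑ k ∈ range N, b k) := by
  rw [← sum_range_sub]
  exact ⟨sum_le_sum fun k _ => (h k).1, sum_le_sum fun k _ => (h k).2⟩

theorem contraction_product_bounds (σ τ γ : ℝ)
    (hσ : 0 < σ) (hτ : 0 < τ) (hγ : 1 ≤ γ)
    (β θ ρ : ℕ → ℝ) (hβ : ∀ k, 0 < β k) (hθ : ∀ k, θ k ∈ Set.Ioo (0 : ℝ) 1)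
    (hρ0 : ρ 0 = 1) (hρ : ∀ k, ρ (k + 1) = (1 - θ k) * ρ k)
    (hcond : ∀ k, τ * β k * θ k ^ γ = σ * ρ (k + 1)) :
    ∀ N : ℕ, 1 ≤ N →
      (1 + (σ / τ) ^ (1 / γ) * ∑ k ∈ Finset.range N, β k ^ (-(1 / γ))) ^ (-γ) ≤ ρ N ∧
      ρ N ≤ (1 + γ⁻¹ * (σ / τ) ^ (1 / γ) * ∑ k ∈ Finset.range N, β k ^ (-(1 / γ))) ^ (-γ) := by
  intro N _
  have hγ0 : 0 < γ := one_pos.trans_le hγ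
  have hρ_pos : ∀ k, 0 < ρ k := fun k => by
    induction k with
    | zero => simp [hρ0]
    | succ k ih => rw [hρ k]; exact mul_pos (sub_pos.2 (hθ k).2) ih
  set c := (σ / τ) ^ (1 / γ)
  set b := fun k => β k ^ (-(1 / γ))
  set x := fun k => ρ k ^ (-(1 / γ))
  have hstep : ∀ k, x (k + 1) - x k ∈ Set.Icc (1 / γ * (c * b k)) (c * b k) := fun k => by
    have hinc := rpow_neg_one_sub_mul_sub_rpow_neg_mem_Icc (by positivity)
      ((div_le_one hγ0).2 hγ) (hθ k).1.le (hθ k).2 (hρ_pos k)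
    rwa [← hρ k, mul_assoc, mul_rpow_neg_eq_of_mul_rpow_eq hσ.le hτ (hβ k) hγ0.ne' (hθ k).1.le
      (hρ_pos (k + 1)) (hcond k)] at hinc
  have hx0 : x 0 = 1 := by simp [x, hρ0]
  obtain ⟨hlower, hupper⟩ := sub_mem_Icc_sum_of_forall_sub_mem_Icc hstep N
  rw [← mul_sum, ← mul_sum, ← mul_assoc, one_div, hx0] at hlower
  rw [← mul_sum, hx0] at hupper
  have hρN : ρ N = x N ^ (-γ) := by
    rw [← rpow_rpow_inv (hρ_pos N).le (neg_ne_zero.2 (one_div_ne_zero hγ0.ne')), inv_neg,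
      inv_div, div_one]
  have hb_sum : 0 ≤ ∑ k ∈ range N, b k := sum_nonneg fun k _ => (rpow_pos_of_pos (hβ k) _).le
  rw [hρN]
  exact ⟨rpow_le_rpow_of_nonpos (rpow_pos_of_pos (hρ_pos N) _) (by linarith) (by linarith),
    rpow_le_rpow_of_nonpos (by positivity) (by linarith) (by linarith)⟩
end

section
/- Accumulated error bound: with ρ_k as above and δ_N = ρ_N Σ_{k=0}^{N−1} ν_k / ρ_{k+1} (equivalently δ_{k+1} = (1−θ_k)δ_k + ν_k, δ_0 = 0), one has δ_N ≤ (1 + γ^{−1}(σ/τ)^{1/γ} Σ_{i=0}^{N−1} β_i^{−1/γ})^{−γ} · Σ_{k=0}^{N−1} (1 + (σ/τ)^{1/γ} Σ_{i=0}^{k} β_i^{−1/γ})^{γ} ν_k. -/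
theorem accumulated_error_bound (σ τ γ : ℝ)
    (hσ : 0 < σ) (hτ : 0 < τ) (hγ : 1 ≤ γ)
    (β θ ρ ν δ : ℕ → ℝ) (hβ : ∀ k, 0 < β k) (hθ : ∀ k, θ k ∈ Set.Ioo (0 : ℝ) 1)
    (hρ0 : ρ 0 = 1) (hρ : ∀ k, ρ (k + 1) = (1 - θ k) * ρ k)
    (hcond : ∀ k, τ * β k * θ k ^ γ = σ * ρ k * (1 - θ k))
    (hν : ∀ k, 0 ≤ ν k) (hδ0 : δ 0 = 0)
    (hδ : ∀ k, δ (k + 1) = (1 - θ k) * δ k + ν k) :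
    ∀ N : ℕ, 1 ≤ N →
      δ N ≤ (1 + γ⁻¹ * (σ / τ) ^ (1 / γ) * ∑ i ∈ Finset.range N, β i ^ (-(1 / γ))) ^ (-γ) *
        ∑ k ∈ Finset.range N,
          (1 + (σ / τ) ^ (1 / γ) * ∑ i ∈ Finset.range (k + 1), β i ^ (-(1 / γ))) ^ γ * ν k := by
  have hγ0 : 0 < γ := lt_of_lt_of_le one_pos hγ
  set c : ℝ := (σ / τ) ^ (1 / γ) with hc
  have hcpos : 0 < c := Real.rpow_pos_of_pos (div_pos hσ hτ) _
  have hρpos : ∀ k, 0 < ρ k := by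
    intro k
    induction k with
    | zero => simp [hρ0]
    | succ n ih =>
      rw [hρ n]
      exact mul_pos (by linarith [(hθ n).2]) ih
  set a : ℕ → ℝ := fun k => ρ k ^ (-(1 / γ)) with ha
  have hapos : ∀ k, 0 < a k := fun k => Real.rpow_pos_of_pos (hρpos k) _
  have ha0 : a 0 = 1 := by simp [ha, hρ0]
  -- a (k+1) * θ k = c * β k ^ (-(1/γ))
  have key : ∀ k, a (k + 1) * θ k = c * β k ^ (-(1 / γ)) := by
    intro k
    have hθk := hθ k
    have hθpos : (0:ℝ) < θ k := hθk.1
    have h1 : θ k ^ γ = (σ / τ) * ρ (k + 1) * (β k)⁻¹ := by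
      have hb := hβ k
      have h : θ k ^ γ = (σ * ρ k * (1 - θ k)) / (τ * β k) := by
        rw [eq_div_iff (by positivity)]; linarith [hcond k]
      rw [h, hρ k]
      field_simp
    have h2 : θ k = c * ρ (k + 1) ^ (1 / γ) * (β k) ^ (-(1 / γ)) := by
      have : θ k = ((σ / τ) * ρ (k + 1) * (β k)⁻¹) ^ (1 / γ) := by
        rw [← h1, ← Real.rpow_mul hθpos.le, mul_one_div, div_self hγ0.ne', Real.rpow_one]
      rw [this,
        Real.mul_rpow (mul_nonneg (by positivity) (hρpos _).le) (inv_nonneg.mpr (hβ k).le),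
        Real.mul_rpow (by positivity) (hρpos _).le,
        ← Real.rpow_neg_one (β k), ← Real.rpow_mul (hβ k).le]
      ring_nf
      rw [hc, div_eq_mul_inv, one_div]
      ring
    rw [h2, ha]
    rw [show ρ (k+1) ^ (-(1/γ)) * (c * ρ (k+1) ^ (1/γ) * β k ^ (-(1/γ)))
      = c * (ρ (k+1) ^ (-(1/γ)) * ρ (k+1) ^ (1/γ)) * β k ^ (-(1/γ)) by ring,
      ← Real.rpow_add (hρpos (k+1))]
    simp
  have harec : ∀ k, a k = a (k + 1) * (1 - θ k) ^ (1 / γ) := by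
    intro k
    have hθk := hθ k
    have h01 : (0:ℝ) < 1 - θ k := by linarith [hθk.2]
    have hcan : (1 - θ k) ^ (-(1/γ)) * (1 - θ k) ^ (1/γ) = 1 := by
      rw [← Real.rpow_add h01, neg_add_cancel, Real.rpow_zero]
    rw [ha]
    simp only
    rw [hρ k, Real.mul_rpow h01.le (hρpos k).le, mul_right_comm, hcan, one_mul]
  -- upper step: a (k+1) ≤ a k + c * β k ^ (-(1/γ))
  have hstep_up : ∀ k, a (k + 1) ≤ a k + c * β k ^ (-(1 / γ)) := by
    intro k
    have hθk := hθ k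
    have h1 : (1 - θ k) ^ (1:ℝ) ≤ (1 - θ k) ^ (1 / γ) :=
      Real.rpow_le_rpow_of_exponent_ge (by linarith [hθk.2]) (by linarith [hθk.1])
        (by rw [div_le_one hγ0]; exact hγ)
    rw [Real.rpow_one] at h1
    have h2 : a (k + 1) * (1 - θ k) ≤ a (k + 1) * (1 - θ k) ^ (1 / γ) :=
      mul_le_mul_of_nonneg_left h1 (hapos (k + 1)).le
    have h3 := harec k
    have h4 := key k
    nlinarith [hapos (k + 1)]
  -- lower step: a k + γ⁻¹ * c * β k ^ (-(1/γ)) ≤ a (k+1)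
  have hstep_lo : ∀ k, a k + γ⁻¹ * (c * β k ^ (-(1 / γ))) ≤ a (k + 1) := by
    intro k
    have hθk := hθ k
    have hq : θ k / γ < 1 := lt_of_le_of_lt (by
      rw [div_le_iff₀ hγ0]; nlinarith [hθk.1]) hθk.2
    -- Bernoulli: 1 - θ ≤ (1 - θ/γ)^γ
    have hb : 1 + γ * (-(θ k / γ)) ≤ (1 + (-(θ k / γ))) ^ γ :=
      one_add_mul_self_le_rpow_one_add (by nlinarith [hθk.1]) hγ
    have hb' : 1 - θ k ≤ (1 - θ k / γ) ^ γ := by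
      have e1 : γ * (-(θ k / γ)) = -θ k := by
        rw [mul_comm, neg_mul, div_mul_cancel₀ _ hγ0.ne']
      have e2 : (1:ℝ) + (-(θ k / γ)) = 1 - θ k / γ := by ring
      rw [e1, e2] at hb
      linarith
    -- take 1/γ power
    have h1 : (1 - θ k) ^ (1 / γ) ≤ 1 - θ k / γ := by
      calc (1 - θ k) ^ (1 / γ) ≤ ((1 - θ k / γ) ^ γ) ^ (1 / γ) :=
            Real.rpow_le_rpow (by linarith [hθk.2]) hb' (by positivity)
        _ = 1 - θ k / γ := by
            rw [← Real.rpow_mul (by linarith : (0:ℝ) ≤ 1 - θ k / γ),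
              mul_one_div, div_self hγ0.ne', Real.rpow_one]
    have h2 : a (k + 1) * (1 - θ k) ^ (1 / γ) ≤ a (k + 1) * (1 - θ k / γ) :=
      mul_le_mul_of_nonneg_left h1 (hapos (k + 1)).le
    have h3 := harec k
    have h4 := key k
    have h5 : a (k + 1) * (1 - θ k / γ) = a (k + 1) - (a (k + 1) * θ k) / γ := by ring
    rw [h3]
    rw [h5, h4] at h2
    have : (c * β k ^ (-(1 / γ))) / γ = γ⁻¹ * (c * β k ^ (-(1 / γ))) := by
      rw [div_eq_mul_inv]; ring
    linarith [h2, this ▸ h2]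
  have hSnonneg : ∀ n, 0 ≤ ∑ i ∈ Finset.range n, β i ^ (-(1 / γ)) := by
    intro n
    exact Finset.sum_nonneg fun i _ => (Real.rpow_pos_of_pos (hβ i) _).le
  -- summed upper bound
  have hup : ∀ k, a (k + 1) ≤ 1 + c * ∑ i ∈ Finset.range (k + 1), β i ^ (-(1 / γ)) := by
    intro k
    induction k with
    | zero =>
      have := hstep_up 0
      rw [ha0] at this
      simpa [Finset.sum_range_one] using this
    | succ n ih =>
      have := hstep_up (n + 1)
      rw [Finset.sum_range_succ, mul_add]
      linarith
  -- summed lower bound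
  have hlo : ∀ N, 1 + γ⁻¹ * c * ∑ i ∈ Finset.range N, β i ^ (-(1 / γ)) ≤ a N := by
    intro N
    induction N with
    | zero => simp [ha0]
    | succ n ih =>
      have := hstep_lo n
      rw [Finset.sum_range_succ, mul_add]
      linarith
  -- main induction: δ N ≤ ρ N * T N
  have hmain : ∀ N, δ N ≤ ρ N *
      ∑ k ∈ Finset.range N,
        (1 + c * ∑ i ∈ Finset.range (k + 1), β i ^ (-(1 / γ))) ^ γ * ν k := by
    intro N
    induction N with
    | zero => simp [hδ0]
    | succ n ih =>
      have hθn := hθ n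
      have hT : 0 ≤ ∑ k ∈ Finset.range n,
          (1 + c * ∑ i ∈ Finset.range (k + 1), β i ^ (-(1 / γ))) ^ γ * ν k :=
        Finset.sum_nonneg fun k _ =>
          mul_nonneg (Real.rpow_nonneg (by nlinarith [hSnonneg (k+1)]) _) (hν k)
      -- 1 ≤ ρ (n+1) * (1 + c S_{n+1})^γ
      have haγ : a (n + 1) ^ γ = (ρ (n + 1))⁻¹ := by
        rw [ha]
        simp only
        rw [← Real.rpow_mul (hρpos (n+1)).le]
        rw [show -(1/γ) * γ = -1 by field_simp, Real.rpow_neg_one]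
      have h1 : a (n + 1) ^ γ ≤ (1 + c * ∑ i ∈ Finset.range (n + 1), β i ^ (-(1 / γ))) ^ γ :=
        Real.rpow_le_rpow (hapos (n+1)).le (hup n) hγ0.le
      have h2 : 1 ≤ ρ (n + 1) * (1 + c * ∑ i ∈ Finset.range (n + 1), β i ^ (-(1 / γ))) ^ γ := by
        rw [haγ] at h1
        calc (1:ℝ) = ρ (n + 1) * (ρ (n + 1))⁻¹ := by
              rw [mul_inv_cancel₀ (hρpos (n+1)).ne']
          _ ≤ _ := mul_le_mul_of_nonneg_left h1 (hρpos (n+1)).le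
      have h3 : ν n ≤ ρ (n + 1) *
          ((1 + c * ∑ i ∈ Finset.range (n + 1), β i ^ (-(1 / γ))) ^ γ * ν n) := by
        rw [← mul_assoc]
        nlinarith [hν n, h2]
      calc δ (n + 1) = (1 - θ n) * δ n + ν n := hδ n
        _ ≤ (1 - θ n) * (ρ n * ∑ k ∈ Finset.range n,
              (1 + c * ∑ i ∈ Finset.range (k + 1), β i ^ (-(1 / γ))) ^ γ * ν k) + ν n := by
            have := mul_le_mul_of_nonneg_left ih (by linarith [hθn.2] : (0:ℝ) ≤ 1 - θ n)
            linarith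
        _ ≤ ρ (n + 1) * ∑ k ∈ Finset.range n,
              (1 + c * ∑ i ∈ Finset.range (k + 1), β i ^ (-(1 / γ))) ^ γ * ν k
            + ρ (n + 1) * ((1 + c * ∑ i ∈ Finset.range (n + 1), β i ^ (-(1 / γ))) ^ γ * ν n) := by
            have e : ρ (n + 1) * ∑ k ∈ Finset.range n,
                (1 + c * ∑ i ∈ Finset.range (k + 1), β i ^ (-(1 / γ))) ^ γ * ν k
                = (1 - θ n) * (ρ n * ∑ k ∈ Finset.range n,
                (1 + c * ∑ i ∈ Finset.range (k + 1), β i ^ (-(1 / γ))) ^ γ * ν k) := by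
              rw [hρ n]; ring
            linarith [h3, e]
        _ = ρ (n + 1) * ∑ k ∈ Finset.range (n + 1),
              (1 + c * ∑ i ∈ Finset.range (k + 1), β i ^ (-(1 / γ))) ^ γ * ν k := by
            conv_rhs => rw [Finset.sum_range_succ, mul_add]
  intro N _
  have hT : 0 ≤ ∑ k ∈ Finset.range N,
      (1 + c * ∑ i ∈ Finset.range (k + 1), β i ^ (-(1 / γ))) ^ γ * ν k :=
    Finset.sum_nonneg fun k _ =>
      mul_nonneg (Real.rpow_nonneg (by nlinarith [hSnonneg (k+1)]) _) (hν k)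
  have hApos : 0 < 1 + γ⁻¹ * c * ∑ i ∈ Finset.range N, β i ^ (-(1 / γ)) := by
    have := hSnonneg N
    have : 0 ≤ γ⁻¹ * c * ∑ i ∈ Finset.range N, β i ^ (-(1 / γ)) := by positivity
    linarith
  have hρa : ρ N = a N ^ (-γ) := by
    rw [ha]
    simp only
    rw [← Real.rpow_mul (hρpos N).le]
    rw [show -(1/γ) * -γ = 1 by field_simp, Real.rpow_one]
  have hρle : ρ N ≤ (1 + γ⁻¹ * c * ∑ i ∈ Finset.range N, β i ^ (-(1 / γ))) ^ (-γ) := by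
    rw [hρa]
    exact Real.rpow_le_rpow_of_nonpos hApos (hlo N) (by linarith)
  calc δ N ≤ ρ N * ∑ k ∈ Finset.range N,
        (1 + c * ∑ i ∈ Finset.range (k + 1), β i ^ (-(1 / γ))) ^ γ * ν k := hmain N
    _ ≤ (1 + γ⁻¹ * c * ∑ i ∈ Finset.range N, β i ^ (-(1 / γ))) ^ (-γ) *
        ∑ k ∈ Finset.range N,
          (1 + c * ∑ i ∈ Finset.range (k + 1), β i ^ (-(1 / γ))) ^ γ * ν k :=
      mul_le_mul_of_nonneg_right hρle hT
end
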